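/- (Uniqueness of the symmetric solution up to symmetry class.) Let (K₁, K₂, L₁, L₂) and (K₁', K₂', L₁', L₂') be two parameter vectors in ℝ⁴ and let r, r' ∈ (0,1) be symmetric solutions for them, i.e., r = V((K₁ + L₁)·r) = V((K₂ + L₂)·r) and r' = V((K₁' + L₁')·r') = V((K₂' + L₂')·r'). Then r = r' if and only if K₁ + L₁ = K₁' + L₁'. In particular, for each C > 2, the symmetric synchronization level r(C), defined as the solution in (0,1) of r = V(C·r), is unique, and the map C ↦ r(C) is strictly increasing on (2, ∞). -/

import Mathlib

/-!
Write `D`, `N`, `M` for the moments `∫ cosᵏ θ e^{x cos θ} dθ` (`k = 0, 1, 2`), so that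
`V = N / D`, `D' = N` and `N' = M`. Positivity of the variance `M D - N²` makes `V` strictly
increasing. Integrating `(sin θ e^{x cos θ})'` gives `N = x (D - M)`, and with it
`Φ = x² (D² - N²) - 2 x N D` has derivative `-2 x N²`; as `Φ 0 = 0`, `Φ < 0` for `x > 0`, i.e.
`x (1 - V²) < 2 V`, which is exactly what makes `V x / x` strictly decreasing on `(0, ∞)`.
Now `r = V (C r)` says `V x / x = 1 / C` at `x = C r`, so the solution is unique and `C r`, hence
`r = V (C r)`, increases with `C`. For `C > 2` the same inequality gives `V (C r₀) > r₀` at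
`r₀ = √((C - 2) / C)`, while `V < 1`; the intermediate value theorem gives a solution.
-/

open Real Set

/-- The function `V(x) = (∫ cos θ e^{x cos θ} dθ) / (∫ e^{x cos θ} dθ)` over `[0, 2π]`. -/
noncomputable def V (x : ℝ) : ℝ :=
  (∫ θ in (0:ℝ)..(2 * π), Real.cos θ * Real.exp (x * Real.cos θ)) /
  (∫ θ in (0:ℝ)..(2 * π), Real.exp (x * Real.cos θ))

open MeasureTheory

noncomputable def cosMoment (k : ℕ) (x : ℝ) : ℝ :=
  ∫ θ in (0:ℝ)..(2 * π), cos θ ^ k * exp (x * cos θ)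

lemma V_eq_cosMoment (x : ℝ) : V x = cosMoment 1 x / cosMoment 0 x := by
  simp [V, cosMoment]

lemma intervalIntegrable_cos_pow_mul_exp (k : ℕ) (x a b : ℝ) :
    IntervalIntegrable (fun θ => cos θ ^ k * exp (x * cos θ)) volume a b :=
  (by fun_prop : Continuous fun θ => cos θ ^ k * exp (x * cos θ)).intervalIntegrable a b

lemma hasDerivAt_cosMoment (k : ℕ) (x : ℝ) :
    HasDerivAt (cosMoment k) (cosMoment (k + 1) x) x := by
  have hbound : ∀ θ, ∀ y ∈ Metric.ball x 1,
      ‖cos θ ^ (k + 1) * exp (y * cos θ)‖ ≤ exp (|x| + 1) := by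
    intro θ y hy
    have hy' : |y| ≤ |x| + 1 := by
      rw [Metric.mem_ball, dist_eq] at hy
      linarith [abs_sub_abs_le_abs_sub y x]
    have hcos : |cos θ| ≤ 1 := abs_cos_le_one θ
    rw [norm_mul, norm_pow, Real.norm_eq_abs, Real.norm_of_nonneg (exp_pos _).le]
    calc |cos θ| ^ (k + 1) * exp (y * cos θ)
        ≤ 1 * exp (|x| + 1) := by
          gcongr
          · exact pow_le_one₀ (abs_nonneg _) hcos
          · calc y * cos θ ≤ |y| * |cos θ| := (le_abs_self _).trans (abs_mul _ _).le
              _ ≤ |x| + 1 := by nlinarith [abs_nonneg y, abs_nonneg (cos θ)]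
      _ = exp (|x| + 1) := one_mul _
  refine (intervalIntegral.hasDerivAt_integral_of_dominated_loc_of_deriv_le
    (F' := fun y θ => cos θ ^ (k + 1) * exp (y * cos θ)) (bound := fun _ => exp (|x| + 1))
    (Metric.ball_mem_nhds x one_pos) (Filter.Eventually.of_forall fun y =>
      (intervalIntegrable_cos_pow_mul_exp k y 0 (2 * π)).def'.aestronglyMeasurable)
    (intervalIntegrable_cos_pow_mul_exp k x 0 (2 * π))
    (intervalIntegrable_cos_pow_mul_exp (k + 1) x 0 (2 * π)).def'.aestronglyMeasurable
    (Filter.Eventually.of_forall fun θ _ => hbound θ) intervalIntegrable_const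
    (Filter.Eventually.of_forall fun θ _ y _ => ?_)).2
  exact (((hasDerivAt_mul_const (cos θ)).exp).const_mul (cos θ ^ k)).congr_deriv (by ring)

lemma cosMoment_zero_pos (x : ℝ) : 0 < cosMoment 0 x := by
  simp only [cosMoment, pow_zero, one_mul]
  exact intervalIntegral.intervalIntegral_pos_of_pos
    (Continuous.intervalIntegrable (by fun_prop) _ _)
    (fun _ => exp_pos _) (by positivity)

lemma integral_quadratic_cos_mul_exp (a b c x : ℝ) :
    ∫ θ in (0:ℝ)..(2 * π), (a * cos θ ^ 2 + b * cos θ + c) * exp (x * cos θ) =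
      a * cosMoment 2 x + b * cosMoment 1 x + c * cosMoment 0 x := by
  have hsplit : (fun θ => (a * cos θ ^ 2 + b * cos θ + c) * exp (x * cos θ)) = fun θ =>
      a * (cos θ ^ 2 * exp (x * cos θ)) + b * (cos θ ^ 1 * exp (x * cos θ)) +
        c * (cos θ ^ 0 * exp (x * cos θ)) := by
    funext θ; ring
  have hI := intervalIntegrable_cos_pow_mul_exp (x := x) (a := 0) (b := 2 * π)
  rw [hsplit, intervalIntegral.integral_add (((hI 2).const_mul a).add ((hI 1).const_mul b))
    ((hI 0).const_mul c), intervalIntegral.integral_add ((hI 2).const_mul a) ((hI 1).const_mul b),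
    intervalIntegral.integral_const_mul, intervalIntegral.integral_const_mul,
    intervalIntegral.integral_const_mul]
  rfl

lemma integral_quadratic_cos_mul_exp_pos {a b c x : ℝ} (θ₀ : ℝ) (hθ₀ : θ₀ ∈ Icc 0 (2 * π))
    (hnonneg : ∀ θ, 0 ≤ a * cos θ ^ 2 + b * cos θ + c)
    (hpos : 0 < a * cos θ₀ ^ 2 + b * cos θ₀ + c) :
    0 < a * cosMoment 2 x + b * cosMoment 1 x + c * cosMoment 0 x := by
  rw [← integral_quadratic_cos_mul_exp]
  exact intervalIntegral.integral_pos (by positivity) (by fun_prop)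
    (fun θ _ => mul_nonneg (hnonneg θ) (exp_pos _).le) ⟨θ₀, hθ₀, by positivity⟩

lemma cosMoment_one_lt_cosMoment_zero (x : ℝ) : cosMoment 1 x < cosMoment 0 x := by
  have := integral_quadratic_cos_mul_exp_pos (a := 0) (b := -1) (c := 1) (x := x) π
    ⟨pi_pos.le, by linarith [pi_pos]⟩ (fun θ => by linarith [cos_le_one θ]) (by simp)
  linarith

lemma sq_cosMoment_one_lt (x : ℝ) :
    cosMoment 1 x ^ 2 < cosMoment 2 x * cosMoment 0 x := by
  set D := cosMoment 0 x
  set N := cosMoment 1 x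
  -- `∫ (D cos θ - N)² e^{x cos θ} dθ = D (M D - N²)`
  have := integral_quadratic_cos_mul_exp_pos (a := D ^ 2) (b := -2 * D * N) (c := N ^ 2) (x := x)
    0 ⟨le_rfl, by positivity⟩ (fun θ => by nlinarith [sq_nonneg (D * cos θ - N)])
    (by rw [cos_zero]; nlinarith [cosMoment_one_lt_cosMoment_zero x])
  have hD := cosMoment_zero_pos x
  nlinarith

lemma cosMoment_one_eq (x : ℝ) : cosMoment 1 x = x * (cosMoment 0 x - cosMoment 2 x) := by
  have hderiv : ∀ θ ∈ uIcc (0:ℝ) (2 * π), HasDerivAt (fun θ => sin θ * exp (x * cos θ))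
      ((x * cos θ ^ 2 + 1 * cos θ + -x) * exp (x * cos θ)) θ := fun θ _ =>
    ((hasDerivAt_sin θ).mul (((hasDerivAt_cos θ).const_mul x).exp)).congr_deriv
      (by linear_combination -x * exp (x * cos θ) * sin_sq_add_cos_sq θ)
  have := intervalIntegral.integral_eq_sub_of_hasDerivAt hderiv
    (Continuous.intervalIntegrable (by fun_prop) _ _)
  rw [integral_quadratic_cos_mul_exp] at this
  simp only [sin_two_pi, sin_zero, zero_mul, sub_zero] at this
  linarith

lemma hasDerivAt_V (x : ℝ) :
    HasDerivAt V ((cosMoment 2 x * cosMoment 0 x - cosMoment 1 x ^ 2) / cosMoment 0 x ^ 2) x := by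
  rw [show V = fun y => cosMoment 1 y / cosMoment 0 y from funext V_eq_cosMoment]
  exact ((hasDerivAt_cosMoment 1 x).div (hasDerivAt_cosMoment 0 x)
    (cosMoment_zero_pos x).ne').congr_deriv (by ring)

lemma continuous_V : Continuous V :=
  continuous_iff_continuousAt.2 fun x => (hasDerivAt_V x).continuousAt

lemma V_strictMono : StrictMono V :=
  strictMono_of_hasDerivAt_pos hasDerivAt_V fun x =>
    div_pos (sub_pos.2 (sq_cosMoment_one_lt x)) (pow_pos (cosMoment_zero_pos x) 2)

lemma V_zero : V 0 = 0 := by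
  simp [V]

lemma V_pos {x : ℝ} (hx : 0 < x) : 0 < V x :=
  V_zero ▸ V_strictMono hx

lemma V_lt_one (x : ℝ) : V x < 1 := by
  rw [V_eq_cosMoment, div_lt_one (cosMoment_zero_pos x)]
  exact cosMoment_one_lt_cosMoment_zero x

/-- Its negativity for `x > 0` is Amos' bound `V x > x / (1 + √(1 + x²))`. -/
noncomputable def amosGap (x : ℝ) : ℝ :=
  x ^ 2 * (cosMoment 0 x ^ 2 - cosMoment 1 x ^ 2) - 2 * x * cosMoment 1 x * cosMoment 0 x

lemma hasDerivAt_amosGap (x : ℝ) : HasDerivAt amosGap (-2 * x * cosMoment 1 x ^ 2) x := by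
  have hD : HasDerivAt (cosMoment 0) (cosMoment 1 x) x := hasDerivAt_cosMoment 0 x
  have hN : HasDerivAt (cosMoment 1) (cosMoment 2 x) x := hasDerivAt_cosMoment 1 x
  exact ((((hasDerivAt_pow 2 x).mul ((hD.pow 2).sub (hN.pow 2))).sub
    ((((hasDerivAt_id x).const_mul 2).mul hN).mul hD))).congr_deriv <| by
      simp only [id_eq, Pi.sub_apply, Pi.pow_apply, Pi.mul_apply]
      linear_combination (-2 * x * cosMoment 1 x - 2 * cosMoment 0 x) * cosMoment_one_eq x

lemma amosGap_neg {x : ℝ} (hx : 0 < x) : amosGap x < 0 := by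
  have hanti : StrictAntiOn amosGap (Ici 0) := by
    refine strictAntiOn_of_hasDerivWithinAt_neg (convex_Ici 0)
      (fun y _ => (hasDerivAt_amosGap y).continuousAt.continuousWithinAt)
      (fun y _ => (hasDerivAt_amosGap y).hasDerivWithinAt) fun y hy => ?_
    rw [interior_Ici, mem_Ioi] at hy
    have hN : 0 < cosMoment 1 y := by
      have := V_pos hy
      rwa [V_eq_cosMoment, div_pos_iff_of_pos_right (cosMoment_zero_pos y)] at this
    nlinarith [mul_pos hy (pow_pos hN 2)]
  simpa [amosGap] using hanti self_mem_Ici hx.le hx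

lemma mul_one_sub_V_sq_lt {x : ℝ} (hx : 0 < x) : x * (1 - V x ^ 2) < 2 * V x := by
  have hD := cosMoment_zero_pos x
  have hgap : amosGap x = x * cosMoment 0 x ^ 2 * (x * (1 - V x ^ 2) - 2 * V x) := by
    rw [amosGap, V_eq_cosMoment]
    field_simp
  have := amosGap_neg hx
  rw [hgap] at this
  nlinarith [mul_pos hx (pow_pos hD 2)]

lemma hasDerivAt_V_div_self {x : ℝ} (hx : x ≠ 0) :
    HasDerivAt (fun y => V y / y) ((x * (1 - V x ^ 2) - 2 * V x) / x ^ 2) x := by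
  refine ((hasDerivAt_V x).div (hasDerivAt_id x) hx).congr_deriv ?_
  have hD := (cosMoment_zero_pos x).ne'
  rw [V_eq_cosMoment, id_eq]
  field_simp
  linear_combination cosMoment 0 x * cosMoment_one_eq x

lemma strictAntiOn_V_div_self : StrictAntiOn (fun x => V x / x) (Ioi 0) := by
  refine strictAntiOn_of_hasDerivWithinAt_neg (convex_Ioi 0)
    (fun x hx => (hasDerivAt_V_div_self (ne_of_gt hx)).continuousAt.continuousWithinAt)
    (fun x hx => (hasDerivAt_V_div_self (ne_of_gt (interior_subset hx))).hasDerivWithinAt)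
    fun x hx => ?_
  rw [interior_Ioi] at hx
  exact div_neg_of_neg_of_pos (by linarith [mul_one_sub_V_sq_lt hx]) (pow_pos hx 2)

section FixedPoint

variable {c r r' : ℝ}

lemma pos_of_eq_V_mul (hr : 0 < r) (h : r = V (c * r)) : 0 < c := by
  by_contra! hc
  have := V_strictMono.monotone (mul_nonpos_of_nonpos_of_nonneg hc hr.le)
  rw [V_zero, ← h] at this
  linarith

lemma V_mul_div_eq_inv (hr : r ≠ 0) (h : r = V (c * r)) : V (c * r) / (c * r) = c⁻¹ := by
  rw [← h, div_mul_cancel_right₀ hr]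

lemma eq_of_eq_V_mul (hr : 0 < r) (hr' : 0 < r') (h : r = V (c * r)) (h' : r' = V (c * r')) :
    r = r' := by
  have hc := pos_of_eq_V_mul hr h
  have hcr : c * r = c * r' := strictAntiOn_V_div_self.injOn (mul_pos hc hr) (mul_pos hc hr')
    ((V_mul_div_eq_inv hr.ne' h).trans (V_mul_div_eq_inv hr'.ne' h').symm)
  exact mul_left_cancel₀ hc.ne' hcr

lemma lt_of_eq_V_mul_of_lt {c' : ℝ} (hr : 0 < r) (hr' : 0 < r') (h : r = V (c * r))
    (h' : r' = V (c' * r')) (hcc' : c < c') : r < r' := by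
  have hc := pos_of_eq_V_mul hr h
  have hc' := pos_of_eq_V_mul hr' h'
  have hlt : c * r < c' * r' := by
    rw [← strictAntiOn_V_div_self.lt_iff_gt (mul_pos hc' hr') (mul_pos hc hr),
      V_mul_div_eq_inv hr.ne' h, V_mul_div_eq_inv hr'.ne' h']
    exact inv_strictAnti₀ hc hcc'
  calc r = V (c * r) := h
    _ < V (c' * r') := V_strictMono hlt
    _ = r' := h'.symm

lemma exists_eq_V_mul (hc : 2 < c) : ∃ r ∈ Ioo (0:ℝ) 1, r = V (c * r) := by
  -- `r₀` is the fixed point of the Amos bound `x / (1 + √(1 + x²))` in place of `V`.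
  set r₀ := √((c - 2) / c)
  have hc0 : 0 < c := by linarith
  have hr₀sq : r₀ ^ 2 = (c - 2) / c := sq_sqrt (div_pos (by linarith) hc0).le
  have hr₀ : 0 < r₀ := sqrt_pos.2 (div_pos (by linarith) hc0)
  have hr₀1 : r₀ < 1 := by
    rw [sqrt_lt' one_pos, one_pow, div_lt_one hc0]; linarith
  have hx : 0 < c * r₀ := mul_pos hc0 hr₀
  have hlow : r₀ < V (c * r₀) := by
    have hamos := mul_one_sub_V_sq_lt hx
    have hr₀eq : c * r₀ * (1 - r₀ ^ 2) = 2 * r₀ := by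
      rw [hr₀sq]; field_simp; ring
    by_contra! hle
    nlinarith [mul_nonneg (mul_nonneg hx.le (sub_nonneg.2 hle)) (add_pos hr₀ (V_pos hx)).le]
  obtain ⟨r, hr, hfix⟩ := intermediate_value_Ioo' hr₀1.le
    ((continuous_V.comp (continuous_const_mul c)).sub continuous_id).continuousOn
    (show (0:ℝ) ∈ Ioo (V (c * 1) - 1) (V (c * r₀) - r₀) from
      ⟨by linarith [V_lt_one (c * 1)], by linarith⟩)
  exact ⟨r, ⟨hr₀.trans hr.1, hr.2⟩, by linarith [show V (c * r) - r = 0 from hfix]⟩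

end FixedPoint

theorem symmetric_solution_unique_up_to_class :
    (∀ K₁ K₂ L₁ L₂ K₁' K₂' L₁' L₂' r r' : ℝ,
      r ∈ Ioo (0:ℝ) 1 → r' ∈ Ioo (0:ℝ) 1 →
      r = V ((K₁ + L₁) * r) → r = V ((K₂ + L₂) * r) →
      r' = V ((K₁' + L₁') * r') → r' = V ((K₂' + L₂') * r') →
      (r = r' ↔ K₁ + L₁ = K₁' + L₁')) ∧
    (∀ C : ℝ, 2 < C → ∃! r : ℝ, r ∈ Ioo (0:ℝ) 1 ∧ r = V (C * r)) ∧
    (∀ C C' rC rC' : ℝ, 2 < C → 2 < C' →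
      rC ∈ Ioo (0:ℝ) 1 → rC' ∈ Ioo (0:ℝ) 1 →
      rC = V (C * rC) → rC' = V (C' * rC') →
      C < C' → rC < rC') := by
  refine ⟨fun K₁ K₂ L₁ L₂ K₁' K₂' L₁' L₂' r r' hr hr' h _ h' _ => ⟨fun hrr' => ?_, fun hC => ?_⟩,
    fun C hC => ?_, fun C C' rC rC' _ _ hr hr' h h' hCC' => ?_⟩
  · subst hrr'
    exact mul_right_cancel₀ hr.1.ne' (V_strictMono.injective (h.symm.trans h'))
  · exact eq_of_eq_V_mul hr.1 hr'.1 (hC ▸ h) h'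
  · obtain ⟨r, hr, h⟩ := exists_eq_V_mul hC
    exact ⟨r, ⟨hr, h⟩, fun r' ⟨hr', h'⟩ => eq_of_eq_V_mul hr'.1 hr.1 h' h⟩
  · exact lt_of_eq_V_mul_of_lt hr.1 hr'.1 h h' hCC'
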